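/- Let φ(a) = ∫ Ψ(a+w) p(w) dw. Suppose Ψ is odd (Ψ(−u) = −Ψ(u)), Ψ(u) > 0 for u > 0, Ψ is monotonically nondecreasing, |Ψ(u)| ≤ c₁ for all u, and Ψ is differentiable everywhere with |Ψ'(u)| ≤ c₂, for some constants c₁, c₂ > 0; suppose the density p is symmetric (p(u) = p(−u)) and p(u) > 0 for all |u| ≤ c, for some constant c > 0. Then for every g > 0 there exists a constant K > 0 such that |φ(a)| ≥ K |a| for all a with 0 < |a| ≤ g. -/

import Mathlib

/-!
By the symmetry of `p` and the oddness of `Ψ`, `φ` is odd, and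
`2 φ(a) = ∫ (Ψ(a+w) + Ψ(a-w)) p(w) dw` has a nonnegative integrand which is positive for
small `w > 0` when `a > 0`; so `φ > 0` on `(0, ∞)`. Differentiating under the integral,
`φ'(0) = ∫ Ψ' p > 0`, because `Ψ' ≥ 0` and `∫_{-c}^{c} Ψ' = 2 Ψ(c) > 0` where `p > 0`.
Hence the difference quotient `φ(a)/a`, extended by `φ'(0)` at `0`, is continuous and positive
on `[0, g]`, and its minimum there is `K`.
-/

open MeasureTheory Set

theorem integral_pos_of_pos_on {α : Type*} [MeasurableSpace α] {μ : Measure α} {f : α → ℝ}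
    (hf : Integrable f μ) (hf_nonneg : 0 ≤ f) {s : Set α} (hs : μ s ≠ 0)
    (hpos : ∀ x ∈ s, 0 < f x) : 0 < ∫ x, f x ∂μ :=
  (integral_pos_iff_support_of_nonneg hf_nonneg hf).2 <|
    pos_iff_ne_zero.2 fun h => hs (measure_mono_null (fun x hx => (hpos x hx).ne') h)

theorem integral_mul_pos_of_setIntegral_pos {α : Type*} [MeasurableSpace α] {μ : Measure α}
    {f g : α → ℝ} (hf : 0 ≤ f) (hg : 0 ≤ g) (hfg : Integrable (fun x => f x * g x) μ)
    {s : Set α} (hg_pos : ∀ x ∈ s, 0 < g x) (hs : 0 < ∫ x in s, f x ∂μ) :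
    0 < ∫ x, f x * g x ∂μ := by
  refine (integral_nonneg fun x => mul_nonneg (hf x) (hg x)).lt_of_ne fun h => hs.ne' ?_
  have hzero := (integral_eq_zero_iff_of_nonneg (fun x => mul_nonneg (hf x) (hg x)) hfg).1 h.symm
  refine setIntegral_eq_zero_of_ae_eq_zero ?_
  filter_upwards [hzero] with x hx hxs
  exact (mul_eq_zero.1 hx).resolve_right (hg_pos x hxs).ne'

theorem exists_mul_le_of_deriv_pos {F : ℝ → ℝ} (hF : Differentiable ℝ F) (hF0 : F 0 = 0)
    (hF_pos : ∀ a, 0 < a → 0 < F a) (hF'0 : 0 < deriv F 0) {g : ℝ} (hg : 0 < g) :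
    ∃ K, 0 < K ∧ ∀ a ∈ Ioc 0 g, K * a ≤ F a := by
  have hslope_pos : ∀ a ∈ Icc 0 g, 0 < dslope F 0 a := by
    rintro a ⟨ha, -⟩
    rcases ha.eq_or_lt with rfl | ha
    · rwa [dslope_same]
    · rw [dslope_of_ne _ ha.ne', slope_def_field, hF0, sub_zero, sub_zero]
      exact div_pos (hF_pos a ha) ha
  have hcont : ContinuousOn (dslope F 0) (Icc 0 g) :=
    ((continuousOn_dslope Filter.univ_mem).2 ⟨hF.continuous.continuousOn, hF 0⟩).mono
      (subset_univ _)
  obtain ⟨x₀, hx₀, hmin⟩ := isCompact_Icc.exists_isMinOn (nonempty_Icc.2 hg.le) hcont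
  refine ⟨dslope F 0 x₀, hslope_pos x₀ hx₀, fun a ⟨ha, hag⟩ => ?_⟩
  have : dslope F 0 x₀ ≤ dslope F 0 a := hmin (Ioc_subset_Icc_self ⟨ha, hag⟩)
  rwa [dslope_of_ne _ ha.ne', slope_def_field, hF0, sub_zero, sub_zero, le_div_iff₀ ha] at this

section

variable {Ψ p : ℝ → ℝ}

theorem integrable_comp_add_mul (hp : Integrable p) (hΨ : Measurable Ψ) {C : ℝ}
    (hΨ_bdd : ∀ u, |Ψ u| ≤ C) (a : ℝ) : Integrable fun w => Ψ (a + w) * p w :=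
  hp.bdd_mul (hΨ.comp (measurable_const_add a)).aestronglyMeasurable
    (ae_of_all _ fun _ => hΨ_bdd _)

theorem hasDerivAt_integral_comp_add_mul (hp : Integrable p) (hΨ : Differentiable ℝ Ψ)
    {C C' : ℝ} (hΨ_bdd : ∀ u, |Ψ u| ≤ C) (hΨ'_bdd : ∀ u, |deriv Ψ u| ≤ C') (x : ℝ) :
    HasDerivAt (fun a => ∫ w, Ψ (a + w) * p w) (∫ w, deriv Ψ (x + w) * p w) x :=
  (hasDerivAt_integral_of_dominated_loc_of_deriv_le (F' := fun a w => deriv Ψ (a + w) * p w)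
    (bound := fun w => C' * ‖p w‖) Filter.univ_mem
    (Filter.Eventually.of_forall fun a =>
      (integrable_comp_add_mul hp hΨ.continuous.measurable hΨ_bdd a).1)
    (integrable_comp_add_mul hp hΨ.continuous.measurable hΨ_bdd x)
    (((measurable_deriv Ψ).comp (measurable_const_add x)).aestronglyMeasurable.mul hp.1)
    (ae_of_all _ fun w a _ => by
      rw [norm_mul]; exact mul_le_mul_of_nonneg_right (hΨ'_bdd _) (norm_nonneg _))
    (hp.norm.const_mul C')
    (ae_of_all _ fun w a _ =>
      (((hΨ (a + w)).hasDerivAt.comp_add_const a w).mul_const (p w)))).2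

theorem integral_comp_sub_mul_of_even (hp_even : ∀ u, p u = p (-u)) (a : ℝ) :
    ∫ w, Ψ (a - w) * p w = ∫ w, Ψ (a + w) * p w := by
  rw [← integral_neg_eq_self]
  simp only [sub_neg_eq_add, ← hp_even]

theorem integral_comp_neg_add_mul (hΨ_odd : ∀ u, Ψ (-u) = -Ψ u) (hp_even : ∀ u, p u = p (-u))
    (a : ℝ) : ∫ w, Ψ (-a + w) * p w = -∫ w, Ψ (a + w) * p w := by
  rw [← integral_comp_sub_mul_of_even hp_even, ← integral_neg]
  congr 1 with w
  rw [← neg_add', hΨ_odd, neg_mul]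

theorem integral_comp_add_mul_pos (hp : Integrable p) (hp_nonneg : 0 ≤ p)
    (hp_even : ∀ u, p u = p (-u)) {c : ℝ} (hc : 0 < c) (hp_pos : ∀ u ∈ Icc 0 c, 0 < p u)
    (hΨ_mono : Monotone Ψ) (hΨ_odd : ∀ u, Ψ (-u) = -Ψ u) (hΨ_pos : ∀ u, 0 < u → 0 < Ψ u)
    {C : ℝ} (hΨ_bdd : ∀ u, |Ψ u| ≤ C) {a : ℝ} (ha : 0 < a) : 0 < ∫ w, Ψ (a + w) * p w := by
  have hint_sub : Integrable fun w => Ψ (a - w) * p w :=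
    hp.bdd_mul (hΨ_mono.measurable.comp (measurable_const_sub a)).aestronglyMeasurable
      (ae_of_all _ fun _ => hΨ_bdd _)
  have hsymm : 2 * ∫ w, Ψ (a + w) * p w = ∫ w, (Ψ (a + w) + Ψ (a - w)) * p w := by
    rw [two_mul]
    nth_rw 2 [← integral_comp_sub_mul_of_even hp_even]
    rw [← integral_add (integrable_comp_add_mul hp hΨ_mono.measurable hΨ_bdd a) hint_sub]
    simp only [add_mul]
  suffices 0 < ∫ w, (Ψ (a + w) + Ψ (a - w)) * p w by linarith
  refine integral_pos_of_pos_on (s := Ioo 0 (min a c)) ?_ (fun w => ?_) ?_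
    (fun w ⟨hw, hwa⟩ => ?_)
  · simp only [add_mul]
    exact (integrable_comp_add_mul hp hΨ_mono.measurable hΨ_bdd a).add hint_sub
  · -- `Ψ (a - w) = -Ψ (w - a) ≥ -Ψ (a + w)`
    have : Ψ (w - a) ≤ Ψ (a + w) := hΨ_mono (by linarith)
    rw [← neg_sub, hΨ_odd] at this
    exact mul_nonneg (by linarith) (hp_nonneg w)
  · simp [ha, hc]
  · have hwa' : w < a := hwa.trans_le (min_le_left a c)
    have : Ψ a ≤ Ψ (a + w) := hΨ_mono (by linarith)
    exact mul_pos (by linarith [hΨ_pos a ha, hΨ_pos (a - w) (by linarith)])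
      (hp_pos w ⟨hw.le, hwa.le.trans (min_le_right a c)⟩)

theorem integral_deriv_mul_pos (hp : Integrable p) (hp_nonneg : 0 ≤ p) {a b : ℝ}
    (hp_pos : ∀ u ∈ Icc a b, 0 < p u) (hΨ : Differentiable ℝ Ψ) (hΨ_mono : Monotone Ψ)
    (hΨ_lt : Ψ a < Ψ b) {C' : ℝ} (hΨ'_bdd : ∀ u, |deriv Ψ u| ≤ C') :
    0 < ∫ w, deriv Ψ w * p w := by
  have hab : a ≤ b := (hΨ_mono.reflect_lt hΨ_lt).le
  have hΨ'_int : IntervalIntegrable (deriv Ψ) volume a b :=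
    (intervalIntegrable_iff_integrableOn_Ioc_of_le hab).2 <|
      Integrable.mono' (integrableOn_const measure_Ioc_lt_top.ne)
        (measurable_deriv Ψ).aestronglyMeasurable (ae_of_all _ hΨ'_bdd)
  refine integral_mul_pos_of_setIntegral_pos (fun _ => hΨ_mono.deriv_nonneg) hp_nonneg
    (hp.bdd_mul (measurable_deriv Ψ).aestronglyMeasurable (ae_of_all _ hΨ'_bdd))
    (fun u hu => hp_pos u (Ioc_subset_Icc_self hu)) ?_
  rw [← intervalIntegral.integral_of_le hab,
    intervalIntegral.integral_eq_sub_of_hasDerivAt (fun x _ => (hΨ x).hasDerivAt) hΨ'_int]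
  linarith

end

theorem phi_lower_bound_general (p Ψ : ℝ → ℝ)
    (hp_nonneg : ∀ u, 0 ≤ p u)
    (hp_int : ∫ u, p u = 1)
    (hΨ_odd : ∀ u, Ψ (-u) = -Ψ u)
    (hΨ_pos : ∀ u : ℝ, 0 < u → 0 < Ψ u)
    (hΨ_mono : ∀ u v : ℝ, u ≤ v → Ψ u ≤ Ψ v)
    (c₁ : ℝ) (hΨ_bdd : ∀ u, |Ψ u| ≤ c₁)
    (hΨ_diff : ∀ u : ℝ, DifferentiableAt ℝ Ψ u)
    (c₂ : ℝ) (hΨ'_bdd : ∀ u, |deriv Ψ u| ≤ c₂)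
    (hp_symm : ∀ u, p u = p (-u))
    (c : ℝ) (hc : 0 < c) (hp_pos : ∀ u : ℝ, |u| ≤ c → 0 < p u)
    (φ : ℝ → ℝ) (hφ : ∀ a, φ a = ∫ w, Ψ (a + w) * p w) :
    ∀ g : ℝ, 0 < g → ∃ K : ℝ, 0 < K ∧
      ∀ a : ℝ, 0 < |a| → |a| ≤ g → K * |a| ≤ |φ a| := by
  intro g hg
  have hp : Integrable p := Integrable.of_integral_ne_zero (by rw [hp_int]; exact one_ne_zero)
  have hΨ_mono' : Monotone Ψ := fun u v => hΨ_mono u v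
  have hp_pos' : ∀ u ∈ Icc (-c) c, 0 < p u := fun u hu => hp_pos u (abs_le.2 hu)
  have hφ_deriv : ∀ x, HasDerivAt φ (∫ w, deriv Ψ (x + w) * p w) x := fun x => by
    simpa only [← hφ] using hasDerivAt_integral_comp_add_mul hp hΨ_diff hΨ_bdd hΨ'_bdd x
  have hφ_pos : ∀ a, 0 < a → 0 < φ a := fun a ha => by
    simpa only [hφ] using integral_comp_add_mul_pos hp hp_nonneg hp_symm hc
      (fun u hu => hp_pos' u ⟨by linarith [hu.1], hu.2⟩) hΨ_mono' hΨ_odd hΨ_pos hΨ_bdd ha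
  have hφ_odd : ∀ a, φ (-a) = -φ a := fun a => by
    simpa only [hφ] using integral_comp_neg_add_mul hΨ_odd hp_symm a
  have hφ'0 : 0 < deriv φ 0 := by
    simpa only [(hφ_deriv 0).deriv, zero_add] using integral_deriv_mul_pos hp hp_nonneg hp_pos'
      hΨ_diff hΨ_mono' (by linarith [hΨ_odd c, hΨ_pos c hc]) hΨ'_bdd
  obtain ⟨K, hK, hKφ⟩ := exists_mul_le_of_deriv_pos (fun x => (hφ_deriv x).differentiableAt)
    (self_eq_neg.1 (by simpa using hφ_odd 0)) hφ_pos hφ'0 hg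
  refine ⟨K, hK, fun a ha hag => ?_⟩
  have hφ_abs : |φ a| = φ |a| := by
    rw [← abs_of_pos (hφ_pos |a| ha)]
    rcases abs_choice a with h | h <;> simp only [h, hφ_odd, abs_neg]
  rw [hφ_abs]
  exact hKφ |a| ⟨ha, hag⟩

/-- Under the full set of assumptions on the nonlinearity `Ψ` and the
symmetric density `p` which is positive around the origin, for every `g > 0`
there exists `K > 0` such that `|φ(a)| ≥ K |a|` whenever `0 < |a| ≤ g`, where
`φ(a) = ∫ Ψ(a+w) p(w) dw`. -/
theorem phi_lower_bound (p Ψ : ℝ → ℝ)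
    (hp_meas : Measurable p) (hp_nonneg : ∀ u, 0 ≤ p u)
    (hp_int : ∫ u, p u = 1)
    (hΨ_meas : Measurable Ψ)
    (hΨ_odd : ∀ u, Ψ (-u) = -Ψ u)
    (hΨ_pos : ∀ u : ℝ, 0 < u → 0 < Ψ u)
    (hΨ_mono : ∀ u v : ℝ, u ≤ v → Ψ u ≤ Ψ v)
    (c₁ : ℝ) (hc₁ : 0 < c₁) (hΨ_bdd : ∀ u, |Ψ u| ≤ c₁)
    (hΨ_diff : ∀ u : ℝ, DifferentiableAt ℝ Ψ u)
    (c₂ : ℝ) (hc₂ : 0 < c₂) (hΨ'_bdd : ∀ u, |deriv Ψ u| ≤ c₂)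
    (hp_symm : ∀ u, p u = p (-u))
    (c : ℝ) (hc : 0 < c) (hp_pos : ∀ u : ℝ, |u| ≤ c → 0 < p u)
    (φ : ℝ → ℝ) (hφ : ∀ a, φ a = ∫ w, Ψ (a + w) * p w) :
    ∀ g : ℝ, 0 < g → ∃ K : ℝ, 0 < K ∧
      ∀ a : ℝ, 0 < |a| → |a| ≤ g → K * |a| ≤ |φ a| :=
  phi_lower_bound_general p Ψ hp_nonneg hp_int hΨ_odd hΨ_pos hΨ_mono c₁ hΨ_bdd hΨ_diff c₂ hΨ'_bdd
    hp_symm c hc hp_pos φ hφ
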